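/- Let K and Z be nonnegative-integer-valued random variables and let Y be a mixed Poisson random variable whose (random) parameter Λ satisfies Λ ≥ 0 a.s. If Z ~ Poisson(λ) for a constant λ > 0, then the total variation distance between Y and Z satisfies d_TV(Y, Z) ≤ min(1, √(2/λ)·(1/√2)) · E|Λ − λ|; in particular d_TV(Y, Z) ≤ min(1, 1/√λ) · E|Λ − λ|. -/

import Mathlib

/-!
Write `p_t(k) = e^{-t} t^k / k!`. After exchanging the sum over `A` with the expectation over `Λ`,
it suffices to bound `|∑_{k ∈ A} (p_s(k) - p_t(k))|` by `min 1 (1/√t) · |s - t|` pointwise in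
`s = Λ ω`. Both weight vectors sum to `1`, so this is at most half the `ℓ¹` distance
`∑ |p_s - p_t|`. That distance is at most `2 (1 - e^{-|s-t|})`, because `p_s ≥ e^{-(s-t)} p_t`
for `s ≥ t`; and by Cauchy–Schwarz its square is at most the `χ²` divergence
`∑ p_s² / p_t - 1 = e^{(s-t)²/t} - 1`, which is `≤ 2 (s-t)²/t` as long as `(s-t)² ≤ t`.
-/

open MeasureTheory ProbabilityTheory

section TotalVariation

variable {ι : Type*}

theorem abs_tsum_subtype_le_half_tsum_abs {d : ι → ℝ} (hd : HasSum d 0) (s : Set ι) :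
    |∑' i : s, d i| ≤ (∑' i, |d i|) / 2 := by
  have habs : Summable (fun i => |d i|) := hd.summable.abs
  have hpiece (t : Set ι) : |∑' i : t, d i| ≤ ∑' i : t, |d i| := by
    simpa only [Real.norm_eq_abs] using
      norm_tsum_le_tsum_norm (f := fun i : t => d i) (habs.subtype t)
  have hsplit := hd.summable.tsum_subtype_add_tsum_subtype_compl s
  rw [hd.tsum_eq, add_eq_zero_iff_eq_neg] at hsplit
  have hs := hpiece s
  rw [hsplit, abs_neg] at hs ⊢
  linarith [hpiece sᶜ, habs.tsum_subtype_add_tsum_subtype_compl s]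

variable {p q : ι → ℝ}

theorem tsum_abs_sub_le_of_mul_le (hp : HasSum p 1) (hq : HasSum q 1) (hq0 : ∀ i, 0 ≤ q i)
    {r : ℝ} (hr : r ≤ 1) (hpq : ∀ i, r * q i ≤ p i) :
    ∑' i, |p i - q i| ≤ 2 * (1 - r) := by
  have hbound : ∀ i, |p i - q i| ≤ (p i - q i) + 2 * (1 - r) * q i := fun i => by
    rcases le_total (q i) (p i) with h | h
    · rw [abs_of_nonneg (sub_nonneg.2 h)]
      nlinarith [hq0 i]
    · rw [abs_of_nonpos (sub_nonpos.2 h)]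
      linarith [hpq i]
  have hsum : HasSum (fun i => (p i - q i) + 2 * (1 - r) * q i) (2 * (1 - r)) := by
    simpa using (hp.sub hq).add (hq.mul_left (2 * (1 - r)))
  calc ∑' i, |p i - q i| ≤ ∑' i, ((p i - q i) + 2 * (1 - r) * q i) :=
        (hp.summable.sub hq.summable).abs.tsum_le_tsum hbound hsum.summable
    _ = 2 * (1 - r) := hsum.tsum_eq

theorem sq_tsum_abs_sub_le (hp : HasSum p 1) (hq : HasSum q 1) (hq0 : ∀ i, 0 < q i) {χ : ℝ}
    (hχ : HasSum (fun i => p i ^ 2 / q i) (1 + χ)) :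
    (∑' i, |p i - q i|) ^ 2 ≤ χ := by
  have hdiv : HasSum (fun i => (p i - q i) ^ 2 / q i) χ := by
    have hexpand : ∀ i, (p i - q i) ^ 2 / q i = p i ^ 2 / q i - 2 * p i + q i := fun i => by
      have := (hq0 i).ne'
      field_simp
      ring
    have h := (hχ.sub (hp.mul_left 2)).add hq
    rw [show 1 + χ - 2 * 1 + 1 = χ by ring] at h
    simpa only [hexpand] using h
  set L := ∑' i, |p i - q i|
  have hL : 0 ≤ L := tsum_nonneg fun i => abs_nonneg _
  rcases hL.eq_or_lt with hL0 | hLpos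
  · rw [← hL0]
    simpa using hasSum_le (fun i => div_nonneg (sq_nonneg _) (hq0 i).le) hasSum_zero hdiv
  -- AM-GM: `|d| ≤ L q / 2 + d² / (2 L q)`, summed over `i`.
  have hamgm : ∀ i, |p i - q i| ≤ L / 2 * q i + (p i - q i) ^ 2 / q i / (2 * L) := fun i => by
    have hqi := hq0 i
    rw [div_div, ← sub_nonneg]
    have : L / 2 * q i + (p i - q i) ^ 2 / (q i * (2 * L)) - |p i - q i|
        = (|p i - q i| - L * q i) ^ 2 / (2 * L * q i) := by
      field_simp
      rw [← sq_abs (p i - q i)]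
      ring
    rw [this]
    positivity
  have hsum : HasSum (fun i => L / 2 * q i + (p i - q i) ^ 2 / q i / (2 * L))
      (L / 2 + χ / (2 * L)) := by
    simpa using (hq.mul_left (L / 2)).add (hdiv.div_const (2 * L))
  have hle : L ≤ L / 2 + χ / (2 * L) :=
    (hp.summable.sub hq.summable).abs.tsum_le_tsum hamgm hsum.summable |>.trans_eq hsum.tsum_eq
  have hχL : L / 2 * (2 * L) ≤ χ :=
    (le_div_iff₀ (by positivity)).1 (by linarith)
  calc L ^ 2 = L / 2 * (2 * L) := by ring
    _ ≤ χ := hχL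

end TotalVariation

/-- Mathlib's `poissonPMFReal` with a real parameter, so that it applies to `Λ ω` directly. -/
noncomputable def poissonTerm (t : ℝ) (k : ℕ) : ℝ :=
  Real.exp (-t) * t ^ k / (Nat.factorial k : ℝ)

theorem poissonTerm_nonneg {t : ℝ} (ht : 0 ≤ t) (k : ℕ) : 0 ≤ poissonTerm t k := by
  unfold poissonTerm; positivity

theorem poissonTerm_pos {t : ℝ} (ht : 0 < t) (k : ℕ) : 0 < poissonTerm t k := by
  unfold poissonTerm; positivity

theorem hasSum_poissonTerm (t : ℝ) : HasSum (poissonTerm t) 1 := by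
  have h := (NormedSpace.expSeries_div_hasSum_exp t).mul_left (Real.exp (-t))
  rw [← Real.exp_eq_exp_ℝ, ← Real.exp_add, neg_add_cancel, Real.exp_zero] at h
  simp_rw [← mul_div_assoc] at h
  exact h

theorem poissonTerm_le_one {t : ℝ} (ht : 0 ≤ t) (k : ℕ) : poissonTerm t k ≤ 1 :=
  le_hasSum (hasSum_poissonTerm t) k fun j _ => poissonTerm_nonneg ht j

theorem continuous_poissonTerm (k : ℕ) : Continuous fun t => poissonTerm t k := by
  unfold poissonTerm; fun_prop

theorem exp_sub_mul_poissonTerm_le {a b : ℝ} (ha : 0 ≤ a) (hab : a ≤ b) (k : ℕ) :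
    Real.exp (a - b) * poissonTerm a k ≤ poissonTerm b k := by
  have hexp : Real.exp (a - b) * Real.exp (-a) = Real.exp (-b) := by
    rw [← Real.exp_add]; ring_nf
  calc Real.exp (a - b) * poissonTerm a k = Real.exp (-b) * a ^ k / (Nat.factorial k : ℝ) := by
        rw [poissonTerm, ← hexp]; ring
    _ ≤ poissonTerm b k := by unfold poissonTerm; gcongr

theorem hasSum_poissonTerm_sq_div (s : ℝ) {t : ℝ} (ht : 0 < t) :
    HasSum (fun k => poissonTerm s k ^ 2 / poissonTerm t k) (Real.exp ((s - t) ^ 2 / t)) := by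
  have h := (NormedSpace.expSeries_div_hasSum_exp (s ^ 2 / t)).mul_left (Real.exp (t - 2 * s))
  rw [← Real.exp_eq_exp_ℝ, ← Real.exp_add] at h
  have hexp : Real.exp (t - 2 * s) = Real.exp (-s) ^ 2 / Real.exp (-t) := by
    rw [sq, ← Real.exp_add, ← Real.exp_sub]; ring_nf
  have hterm (k : ℕ) : poissonTerm s k ^ 2 / poissonTerm t k
      = Real.exp (t - 2 * s) * ((s ^ 2 / t) ^ k / (Nat.factorial k : ℝ)) := by
    rw [hexp, poissonTerm, poissonTerm, div_pow (s ^ 2)]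
    have := ht.ne'
    field_simp
    ring
  have hval : (s - t) ^ 2 / t = t - 2 * s + s ^ 2 / t := by
    field_simp
    ring
  simp_rw [hterm, hval]
  exact h

theorem tsum_abs_poissonTerm_sub_le {s t : ℝ} (hs : 0 ≤ s) (ht : 0 ≤ t) :
    ∑' k, |poissonTerm s k - poissonTerm t k| ≤ 2 * (1 - Real.exp (-|s - t|)) := by
  wlog hts : t ≤ s generalizing s t
  · simpa only [abs_sub_comm] using this ht hs (le_of_not_ge hts)
  rw [abs_of_nonneg (sub_nonneg.2 hts), neg_sub]
  exact tsum_abs_sub_le_of_mul_le (hasSum_poissonTerm s) (hasSum_poissonTerm t)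
    (poissonTerm_nonneg ht) (Real.exp_le_one_iff.2 (by linarith))
    (exp_sub_mul_poissonTerm_le ht hts)

theorem sq_tsum_abs_poissonTerm_sub_le (s : ℝ) {t : ℝ} (ht : 0 < t) (hst : (s - t) ^ 2 ≤ t) :
    (∑' k, |poissonTerm s k - poissonTerm t k|) ^ 2 ≤ 2 * ((s - t) ^ 2 / t) := by
  set x := (s - t) ^ 2 / t
  have hx : |x| ≤ 1 := by
    rw [abs_of_nonneg (by positivity)]
    exact (div_le_one ht).2 hst
  calc (∑' k, |poissonTerm s k - poissonTerm t k|) ^ 2 ≤ Real.exp x - 1 :=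
        sq_tsum_abs_sub_le (hasSum_poissonTerm s) (hasSum_poissonTerm t) (poissonTerm_pos ht)
          (by simpa using hasSum_poissonTerm_sq_div s ht)
    _ ≤ 2 * x := by
        simpa [abs_of_nonneg (show 0 ≤ x by positivity)] using
          (abs_le.1 (Real.abs_exp_sub_one_le hx)).2

theorem abs_tsum_subtype_poissonTerm_sub_le (A : Set ℕ) {s t : ℝ} (hs : 0 ≤ s) (ht : 0 < t) :
    |∑' k : A, (poissonTerm s k - poissonTerm t k)| ≤ min 1 (1 / √t) * |s - t| := by
  set L := ∑' k, |poissonTerm s k - poissonTerm t k|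
  have hhalf : |∑' k : A, (poissonTerm s k - poissonTerm t k)| ≤ L / 2 :=
    abs_tsum_subtype_le_half_tsum_abs
      (by simpa using (hasSum_poissonTerm s).sub (hasSum_poissonTerm t)) A
  have hL := tsum_abs_poissonTerm_sub_le hs ht.le
  have hexp := Real.add_one_le_exp (-|s - t|)
  have hsqrt : 0 < √t := Real.sqrt_pos.2 ht
  rw [min_mul_of_nonneg _ _ (abs_nonneg _), one_mul]
  refine le_min (by linarith) ?_
  rcases le_or_gt ((s - t) ^ 2) t with hst | hst
  · have hsq : L ^ 2 ≤ (2 * (1 / √t * |s - t|)) ^ 2 := by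
      calc L ^ 2 ≤ 2 * ((s - t) ^ 2 / t) := sq_tsum_abs_poissonTerm_sub_le s ht hst
        _ ≤ 4 * ((s - t) ^ 2 / t) := by gcongr; norm_num
        _ = (2 * (1 / √t * |s - t|)) ^ 2 := by
          rw [mul_pow, mul_pow, div_pow, Real.sq_sqrt ht.le, sq_abs]; ring
    have := (pow_le_pow_iff_left₀ (tsum_nonneg fun k => abs_nonneg _) (by positivity)
      two_ne_zero).1 hsq
    linarith
  · have hlt : 1 < 1 / √t * |s - t| := by
      rw [one_div_mul_eq_div, one_lt_div hsqrt, ← Real.sqrt_sq_eq_abs]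
      exact Real.sqrt_lt_sqrt ht.le hst
    linarith [Real.exp_pos (-|s - t|)]

section Mixture

variable {Ω : Type*} [MeasurableSpace Ω] {μ : Measure Ω}

theorem hasSum_integral_of_ae_hasSum_one [IsProbabilityMeasure μ] {ι : Type*} [Countable ι]
    {F : ι → Ω → ℝ} (hF : ∀ i, AEStronglyMeasurable (F i) μ)
    (hF0 : ∀ i, 0 ≤ᵐ[μ] F i)
    (hsum : ∀ᵐ ω ∂μ, HasSum (F · ω) 1) :
    HasSum (fun i => ∫ ω, F i ω ∂μ) 1 := by
  have hbound (i : ι) : ∀ᵐ ω ∂μ, ‖F i ω‖ ≤ F i ω := by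
    filter_upwards [hF0 i] with ω hω using (Real.norm_of_nonneg hω).le
  have hint : Integrable (fun ω => ∑' i, F i ω) μ :=
    (integrable_const 1).congr (hsum.mono fun ω h => h.tsum_eq.symm)
  simpa using hasSum_integral_of_dominated_convergence F hF hbound
    (hsum.mono fun ω h => h.summable) hint hsum

variable {Λ : Ω → ℝ}

theorem integrable_poissonTerm [IsFiniteMeasure μ] (hΛ : Measurable Λ)
    (hΛ0 : ∀ᵐ ω ∂μ, 0 ≤ Λ ω) (k : ℕ) :
    Integrable (fun ω => poissonTerm (Λ ω) k) μ :=
  (integrable_const 1).mono'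
    ((continuous_poissonTerm k).measurable.comp hΛ).aestronglyMeasurable <| by
      filter_upwards [hΛ0] with ω hω
      rw [Real.norm_of_nonneg (poissonTerm_nonneg hω k)]
      exact poissonTerm_le_one hω k

theorem tsum_integral_poissonTerm_sub_tsum_eq [IsProbabilityMeasure μ] (hΛ : Measurable Λ)
    (hΛ0 : ∀ᵐ ω ∂μ, 0 ≤ Λ ω) (t : ℝ) (A : Set ℕ) :
    (∑' k : A, ∫ ω, poissonTerm (Λ ω) k ∂μ) - ∑' k : A, poissonTerm t k
      = ∫ ω, ∑' k : A, (poissonTerm (Λ ω) k - poissonTerm t k) ∂μ := by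
  have hint := integrable_poissonTerm hΛ hΛ0
  have hmix : HasSum (fun k => ∫ ω, poissonTerm (Λ ω) k ∂μ) 1 :=
    hasSum_integral_of_ae_hasSum_one (fun k => (hint k).aestronglyMeasurable)
      (fun k => by filter_upwards [hΛ0] with ω hω using poissonTerm_nonneg hω k)
      (ae_of_all _ fun ω => hasSum_poissonTerm (Λ ω))
  have hnorm (k : ℕ) : ∫ ω, ‖poissonTerm (Λ ω) k - poissonTerm t k‖ ∂μ
      ≤ ∫ ω, poissonTerm (Λ ω) k ∂μ + |poissonTerm t k| := by
    calc ∫ ω, ‖poissonTerm (Λ ω) k - poissonTerm t k‖ ∂μ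
        ≤ ∫ ω, (poissonTerm (Λ ω) k + |poissonTerm t k|) ∂μ := by
          refine integral_mono_ae ((hint k).sub (integrable_const _)).norm
            ((hint k).add (integrable_const _)) ?_
          filter_upwards [hΛ0] with ω hω
          simpa [Real.norm_eq_abs, abs_of_nonneg (poissonTerm_nonneg hω k)] using
            abs_sub (poissonTerm (Λ ω) k) (poissonTerm t k)
      _ = ∫ ω, poissonTerm (Λ ω) k ∂μ + |poissonTerm t k| := by
          rw [integral_add (hint k) (integrable_const _), integral_const]; simp
  have hswap := hasSum_integral_of_summable_integral_norm
    (F := fun (k : A) ω => poissonTerm (Λ ω) k - poissonTerm t k)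
    (fun k => (hint k).sub (integrable_const _))
    (((hmix.summable.add (hasSum_poissonTerm t).summable.abs).subtype A).of_nonneg_of_le
      (fun k => integral_nonneg fun ω => norm_nonneg _) (fun k => hnorm k))
  have hmixA : Summable fun k : A => ∫ ω, poissonTerm (Λ ω) k ∂μ := hmix.summable.subtype A
  have htA : Summable fun k : A => poissonTerm t k := (hasSum_poissonTerm t).summable.subtype A
  rw [← hswap.tsum_eq, ← hmixA.tsum_sub htA]
  refine tsum_congr fun k => ?_
  rw [integral_sub (hint k) (integrable_const _), integral_const]
  simp

end Mixture

theorem mixed_poisson_tv_bound {Ω : Type*} [MeasureSpace Ω]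
    [IsProbabilityMeasure (ℙ : Measure Ω)]
    (Λ : Ω → ℝ) (hΛmeas : Measurable Λ) (hΛnonneg : ∀ᵐ ω ∂ℙ, 0 ≤ Λ ω)
    (hΛint : Integrable Λ (ℙ : Measure Ω))
    (lam : ℝ) (hlam : 0 < lam) (A : Set ℕ) :
    |(∑' k : A, ∫ ω, Real.exp (-Λ ω) * Λ ω ^ (k : ℕ) / (Nat.factorial (k : ℕ) : ℝ))
        - ∑' k : A, Real.exp (-lam) * lam ^ (k : ℕ) / (Nat.factorial (k : ℕ) : ℝ)|
      ≤ min 1 (1 / Real.sqrt lam) * ∫ ω, |Λ ω - lam| := by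
  change |(∑' k : A, ∫ ω, poissonTerm (Λ ω) k ∂ℙ) - ∑' k : A, poissonTerm lam k| ≤ _
  rw [tsum_integral_poissonTerm_sub_tsum_eq hΛmeas hΛnonneg,
    ← integral_const_mul (min 1 (1 / √lam)) fun ω => |Λ ω - lam|]
  refine norm_integral_le_of_norm_le (G := ℝ)
    ((hΛint.sub (integrable_const lam)).abs.const_mul _) ?_
  filter_upwards [hΛnonneg] with ω hω
  exact abs_tsum_subtype_poissonTerm_sub_le A hω hlam
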